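/- Let $a>0$, $a\neq 1$, $0<c<1$, $0<\beta<1$, and suppose the quartic $q$ (numerator of $z'$ for $z(\xi)=-1/\xi+c(1-\beta)/(1+\xi)+ca\beta/(1+a\xi)$) has exactly two real roots $\gamma_1<\gamma_2<0$. Then $\lambda_1<\lambda_2$, where $\lambda_k=z(\gamma_k)$. (Hence the support of the limiting eigenvalue density consists of the single interval $[\lambda_1,\lambda_2]$.) -/

import Mathlib

/-- The quartic numerator of `z'(ξ)`. -/
noncomputable def quartic (a c β x : ℝ) : ℝ :=
  a^2*(1-c)*x^4 + 2*(a^2*(1-c*β) + a*(1-c*(1-β)))*x^3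
    + (1-c*(1-β)+a^2*(1-c*β)+4*a)*x^2 + 2*(1+a)*x + 1

/-- The map `z(ξ)`. -/
noncomputable def zmap (a c β ξ : ℝ) : ℝ :=
  -1/ξ + c*(1-β)/(1+ξ) + c*a*β/(1+a*ξ)

/-!
The quartic is `ξ²(1+ξ)²(1+aξ)² z'(ξ)`. It is negative at both poles `-1` and `-1/a` and tends
to `+∞` at `±∞`, so both poles lie between `γ₁` and `γ₂`; call them `p₁ < p₂`. Across each pole
`z` jumps from `-∞` to `+∞`, and `z → +∞` as `ξ → 0⁻`. If `λ₂ < z₀ < λ₁`, the intermediate value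
theorem gives a preimage of `z₀` in each of `(γ₁, p₁)`, `(p₁, p₂)`, `(p₂, γ₂)`, `(γ₂, 0)`, whereas
clearing denominators turns `z(ξ) = z₀` into a cubic equation. If `λ₁ = λ₂`, then `γ₁` and `γ₂`
are both double roots of the same cubic. Either way a cubic would have four roots.
-/

open Filter Topology Set Polynomial

lemma tendsto_sub_nhdsGT_zero (p : ℝ) : Tendsto (fun x => x - p) (𝓝[>] p) (𝓝[>] 0) := by
  refine tendsto_nhdsWithin_iff.2 ⟨?_, ?_⟩
  · simpa using (tendsto_id.sub_const p).mono_left (nhdsWithin_le_nhds (a := p) (s := Ioi p))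
  · filter_upwards [self_mem_nhdsWithin] with x (hx : p < x) using sub_pos.2 hx

lemma tendsto_sub_nhdsLT_zero (p : ℝ) : Tendsto (fun x => x - p) (𝓝[<] p) (𝓝[<] 0) := by
  refine tendsto_nhdsWithin_iff.2 ⟨?_, ?_⟩
  · simpa using (tendsto_id.sub_const p).mono_left (nhdsWithin_le_nhds (a := p) (s := Iio p))
  · filter_upwards [self_mem_nhdsWithin] with x (hx : x < p) using sub_neg.2 hx

lemma tendsto_add_div_sub_nhdsLT_nhdsGT {g : ℝ → ℝ} {p k : ℝ} (hg : ContinuousAt g p)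
    (hk : 0 < k) :
    Tendsto (fun x => g x + k / (x - p)) (𝓝[<] p) atBot ∧
      Tendsto (fun x => g x + k / (x - p)) (𝓝[>] p) atTop := by
  simp only [div_eq_mul_inv]
  exact ⟨(hg.tendsto.mono_left nhdsWithin_le_nhds).add_atBot
      ((tendsto_sub_nhdsLT_zero p).inv_tendsto_nhdsLT_zero.const_mul_atBot hk),
    (hg.tendsto.mono_left nhdsWithin_le_nhds).add_atTop
      ((tendsto_sub_nhdsGT_zero p).inv_tendsto_nhdsGT_zero.const_mul_atTop hk)⟩

lemma tendsto_quartic_poly_atTop {A : ℝ} (hA : 0 < A) (b₃ b₂ b₁ b₀ : ℝ) :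
    Tendsto (fun x => A*x^4 + b₃*x^3 + b₂*x^2 + b₁*x + b₀) atTop atTop := by
  set P : ℝ[X] := C A * X^4 + C b₃ * X^3 + C b₂ * X^2 + C b₁ * X + C b₀
  have hdeg : P.natDegree = 4 := by
    simp only [P]
    compute_degree!
    exact hA.ne'
  have hlead : P.leadingCoeff = A := by
    rw [leadingCoeff, hdeg]
    simp [P]
  simpa [P] using P.tendsto_atTop_of_leadingCoeff_nonneg
    (natDegree_pos_iff_degree_pos.1 (by omega)) (hlead ▸ hA.le)

lemma mem_Ioo_of_neg {f : ℝ → ℝ} (hf : Continuous f) (hbot : Tendsto f atBot atTop)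
    (htop : Tendsto f atTop atTop) {γ₁ γ₂ : ℝ} (hγ : γ₁ < γ₂)
    (hzeros : ∀ x, f x = 0 → x = γ₁ ∨ x = γ₂) {x : ℝ} (hx : f x < 0) : x ∈ Ioo γ₁ γ₂ := by
  obtain ⟨u, hu, hux⟩ := ((hbot.eventually (eventually_gt_atTop 0)).and
    (eventually_lt_atBot x)).exists
  obtain ⟨v, hv, hxv⟩ := ((htop.eventually (eventually_gt_atTop 0)).and
    (eventually_gt_atTop x)).exists
  obtain ⟨r, hr, hfr⟩ := intermediate_value_Icc' hux.le hf.continuousOn ⟨hx.le, hu.le⟩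
  obtain ⟨s, hs, hfs⟩ := intermediate_value_Icc hxv.le hf.continuousOn ⟨hx.le, hv.le⟩
  have hrx : r < x := hr.2.lt_of_ne (by rintro rfl; linarith)
  have hxs : x < s := hs.1.lt_of_ne' (by rintro rfl; linarith)
  constructor
  · rcases hzeros r hfr with rfl | rfl <;> linarith
  · rcases hzeros s hfs with rfl | rfl <;> linarith

lemma exists_four_preimages {f : ℝ → ℝ} {γ₁ p₁ p₂ γ₂ z : ℝ}
    (hγ₁ : γ₁ < p₁) (hp : p₁ < p₂) (hγ₂ : p₂ < γ₂) (hγ₂0 : γ₂ < 0)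
    (hf : ContinuousOn f (Iio 0 \ {p₁, p₂}))
    (h₁ : Tendsto f (𝓝[<] p₁) atBot ∧ Tendsto f (𝓝[>] p₁) atTop)
    (h₂ : Tendsto f (𝓝[<] p₂) atBot ∧ Tendsto f (𝓝[>] p₂) atTop)
    (h₀ : Tendsto f (𝓝[<] 0) atTop) (hz₁ : z < f γ₁) (hz₂ : f γ₂ < z) :
    ∃ ξ : Fin 4 → ℝ, StrictMono ξ ∧ ∀ i, ξ i ∈ Iio 0 \ {p₁, p₂} ∧ f (ξ i) = z := by
  have ivt : ∀ s ⊆ Iio 0 \ {p₁, p₂}, IsPreconnected s → ∀ x ∈ s, ∀ y ∈ s,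
      f x ≤ z → z ≤ f y → ∃ ξ ∈ s, f ξ = z := fun s hs hsc x hx y hy hxz hzy =>
    hsc.intermediate_value hx hy (hf.mono hs) ⟨hxz, hzy⟩
  have hs₁ : Ico γ₁ p₁ ⊆ Iio 0 \ {p₁, p₂} := fun x hx => by
    simp only [mem_Ico, Set.mem_sdiff, mem_Iio, mem_insert_iff, mem_singleton_iff] at hx ⊢; grind
  have hs₂ : Ioo p₁ p₂ ⊆ Iio 0 \ {p₁, p₂} := fun x hx => by
    simp only [mem_Ioo, Set.mem_sdiff, mem_Iio, mem_insert_iff, mem_singleton_iff] at hx ⊢; grind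
  have hs₃ : Ioc p₂ γ₂ ⊆ Iio 0 \ {p₁, p₂} := fun x hx => by
    simp only [mem_Ioc, Set.mem_sdiff, mem_Iio, mem_insert_iff, mem_singleton_iff] at hx ⊢; grind
  have hs₄ : Ico γ₂ 0 ⊆ Iio 0 \ {p₁, p₂} := fun x hx => by
    simp only [mem_Ico, Set.mem_sdiff, mem_Iio, mem_insert_iff, mem_singleton_iff] at hx ⊢; grind
  obtain ⟨x₁, hx₁, hx₁'⟩ := ((h₁.1.eventually (eventually_lt_atBot z)).and
    (Ioo_mem_nhdsLT hγ₁)).exists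
  obtain ⟨y₁, hy₁, hy₁'⟩ := ((h₁.2.eventually (eventually_gt_atTop z)).and
    (Ioo_mem_nhdsGT hp)).exists
  obtain ⟨x₂, hx₂, hx₂'⟩ := ((h₂.1.eventually (eventually_lt_atBot z)).and
    (Ioo_mem_nhdsLT hp)).exists
  obtain ⟨y₂, hy₂, hy₂'⟩ := ((h₂.2.eventually (eventually_gt_atTop z)).and
    (Ioo_mem_nhdsGT hγ₂)).exists
  obtain ⟨y₀, hy₀, hy₀'⟩ := ((h₀.eventually (eventually_gt_atTop z)).and
    (Ioo_mem_nhdsLT hγ₂0)).exists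
  obtain ⟨ξ₁, hξ₁, hfξ₁⟩ := ivt _ hs₁ isPreconnected_Ico x₁ (Ioo_subset_Ico_self hx₁')
    γ₁ ⟨le_rfl, hγ₁⟩ hx₁.le hz₁.le
  obtain ⟨ξ₂, hξ₂, hfξ₂⟩ := ivt _ hs₂ isPreconnected_Ioo x₂ hx₂' y₁ hy₁' hx₂.le hy₁.le
  obtain ⟨ξ₃, hξ₃, hfξ₃⟩ := ivt _ hs₃ isPreconnected_Ioc γ₂ ⟨hγ₂, le_rfl⟩
    y₂ (Ioo_subset_Ioc_self hy₂') hz₂.le hy₂.le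
  obtain ⟨ξ₄, hξ₄, hfξ₄⟩ := ivt _ hs₄ isPreconnected_Ico γ₂ ⟨le_rfl, hγ₂0⟩
    y₀ (Ioo_subset_Ico_self hy₀') hz₂.le hy₀.le
  have hξ₃₄ : ξ₃ < ξ₄ := by
    refine lt_of_le_of_ne (hξ₃.2.trans hξ₄.1) fun h => hz₂.ne ?_
    rw [← le_antisymm hξ₃.2 (h ▸ hξ₄.1), hfξ₃]
  refine ⟨![ξ₁, ξ₂, ξ₃, ξ₄], Fin.strictMono_iff_lt_succ.2 fun i => ?_, fun i => ?_⟩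
  · fin_cases i
    · exact hξ₁.2.trans hξ₂.1
    · exact hξ₂.2.trans hξ₃.1
    · exact hξ₃₄
  · fin_cases i
    exacts [⟨hs₁ hξ₁, hfξ₁⟩, ⟨hs₂ hξ₂, hfξ₂⟩, ⟨hs₃ hξ₃, hfξ₃⟩, ⟨hs₄ hξ₄, hfξ₄⟩]

lemma Polynomial.four_le_natDegree_of_two_double_roots {K : Type*} [Field K] {p : K[X]}
    (hp : p ≠ 0) {x y : K} (hxy : x ≠ y) (hx : p.IsRoot x ∧ p.derivative.IsRoot x)
    (hy : p.IsRoot y ∧ p.derivative.IsRoot y) : 4 ≤ p.natDegree := by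
  have hsq : ∀ t, p.IsRoot t ∧ p.derivative.IsRoot t → (X - C t)^2 ∣ p := fun t ht =>
    (le_rootMultiplicity_iff hp).1 ((one_lt_rootMultiplicity_iff_isRoot hp).2 ht)
  have hdvd : (X - C x)^2 * (X - C y)^2 ∣ p :=
    (isCoprime_X_sub_C_of_isUnit_sub (sub_ne_zero.2 hxy).isUnit).pow.mul_dvd (hsq x hx) (hsq y hy)
  have := natDegree_le_of_dvd hdvd hp
  rw [natDegree_mul (by simp [X_sub_C_ne_zero]) (by simp [X_sub_C_ne_zero]), natDegree_pow,
    natDegree_pow, natDegree_X_sub_C, natDegree_X_sub_C] at this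
  omega

section zmap

variable {a c β : ℝ}

lemma zmap_denominators_ne_zero (ha : a ≠ 0) {x : ℝ} (hx : x ∉ ({0, -1, -1/a} : Set ℝ)) :
    x ≠ 0 ∧ 1 + x ≠ 0 ∧ 1 + a*x ≠ 0 := by
  simp only [mem_insert_iff, mem_singleton_iff, not_or] at hx
  exact ⟨hx.1, fun h => hx.2.1 (by linarith), fun h => hx.2.2 (by field_simp; linarith)⟩

lemma continuousOn_zmap (ha : a ≠ 0) : ContinuousOn (zmap a c β) {0, -1, -1/a}ᶜ := by
  intro x hx
  obtain ⟨h0, h1, h2⟩ := zmap_denominators_ne_zero ha hx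
  unfold zmap
  exact ContinuousAt.continuousWithinAt (by fun_prop (disch := assumption))

lemma zmap_eq_add_div_sub_neg_one (x : ℝ) :
    zmap a c β x = (-1/x + c*a*β/(1+a*x)) + c*(1-β) / (x - -1) := by
  rw [zmap, sub_neg_eq_add, add_comm x]
  ring

lemma zmap_eq_add_div_sub_neg_inv (ha : a ≠ 0) (x : ℝ) :
    zmap a c β x = (-1/x + c*(1-β)/(1+x)) + c*β / (x - -1/a) := by
  have : c*a*β/(1+a*x) = c*β / (x - -1/a) := by
    rw [show 1 + a*x = a * (x - -1/a) by field_simp; ring, show c*a*β = a*(c*β) by ring,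
      mul_div_mul_left _ _ ha]
  rw [zmap, this]

lemma tendsto_zmap_nhdsLT_zero : Tendsto (zmap a c β) (𝓝[<] 0) atTop := by
  have hg : ContinuousAt (fun x => c*(1-β)/(1+x) + c*a*β/(1+a*x)) 0 := by
    fun_prop (disch := norm_num)
  have hpole : Tendsto (fun x : ℝ => -1 / x) (𝓝[<] 0) atTop := by
    simpa only [div_eq_mul_inv] using
      tendsto_inv_nhdsLT_zero.const_mul_atBot_of_neg (neg_one_lt_zero (R := ℝ))
  refine ((hg.tendsto.mono_left nhdsWithin_le_nhds).add_atTop hpole).congr fun x => ?_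
  rw [zmap]
  ring

lemma tendsto_zmap_pole (ha : 0 < a) (ha₁ : a ≠ 1) (hc : 0 < c) (hβ₀ : 0 < β) (hβ₁ : β < 1)
    {p : ℝ} (hp : p ∈ ({-1, -1/a} : Set ℝ)) :
    Tendsto (zmap a c β) (𝓝[<] p) atBot ∧ Tendsto (zmap a c β) (𝓝[>] p) atTop := by
  rcases hp with rfl | rfl
  · have : 1 + a * -1 ≠ 0 := fun h => ha₁ (by linarith)
    rw [funext zmap_eq_add_div_sub_neg_one]
    exact tendsto_add_div_sub_nhdsLT_nhdsGT
      (by fun_prop (disch := first | assumption | norm_num)) (by nlinarith)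
  · have h₀ : -1/a ≠ 0 := by simp [ha.ne']
    have h₁ : 1 + -1/a ≠ 0 := fun h => ha₁ (by field_simp at h; linarith)
    rw [funext (zmap_eq_add_div_sub_neg_inv ha.ne')]
    exact tendsto_add_div_sub_nhdsLT_nhdsGT (by fun_prop (disch := assumption)) (by positivity)

end zmap

section quartic

variable {a c β : ℝ}

lemma tendsto_quartic (ha : 0 < a) (hc : c < 1) :
    Tendsto (quartic a c β) atBot atTop ∧ Tendsto (quartic a c β) atTop atTop := by
  have hA : 0 < a^2*(1-c) := mul_pos (pow_pos ha 2) (sub_pos.2 hc)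
  refine ⟨((tendsto_quartic_poly_atTop hA (-(2*(a^2*(1-c*β) + a*(1-c*(1-β)))))
    (1-c*(1-β)+a^2*(1-c*β)+4*a) (-(2*(1+a))) 1).comp tendsto_neg_atBot_atTop).congr fun x => ?_,
    tendsto_quartic_poly_atTop hA (2*(a^2*(1-c*β) + a*(1-c*(1-β)))) (1-c*(1-β)+a^2*(1-c*β)+4*a)
      (2*(1+a)) 1⟩
  simp only [Function.comp, quartic]
  ring

lemma quartic_neg_of_mem_poles (ha : 0 < a) (ha₁ : a ≠ 1) (hc : 0 < c) (hβ₀ : 0 < β)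
    (hβ₁ : β < 1) {p : ℝ} (hp : p ∈ ({-1, -1/a} : Set ℝ)) : quartic a c β p < 0 := by
  have hsq : 0 < (a - 1)^2 := by
    have := sub_ne_zero.2 ha₁
    positivity
  rcases hp with rfl | rfl
  · have : quartic a c β (-1) = -(c*(1-β)*(a-1)^2) := by
      rw [quartic]
      ring
    nlinarith [mul_pos (mul_pos hc (sub_pos.2 hβ₁)) hsq]
  · have : quartic a c β (-1/a) * a^2 = -(c*β*(a-1)^2) := by
      rw [quartic]
      field_simp
      ring
    nlinarith [mul_pos (mul_pos hc hβ₀) hsq, pow_pos ha 2]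

end quartic

section preimageCubic

variable {a c β : ℝ}

noncomputable def preimageCubic (a c β z : ℝ) : ℝ[X] :=
  C (z*a) * X^3 + C ((1+a)*z + a*(1-c)) * X^2 + C (z + 1 - c*(1-β) + a*(1-c*β)) * X + C 1

lemma preimageCubic_ne_zero (a c β z : ℝ) : preimageCubic a c β z ≠ 0 := fun h => by
  simpa [preimageCubic] using congrArg (eval 0) h

lemma eval_preimageCubic (ha : a ≠ 0) (z : ℝ) {x : ℝ} (hx : x ∉ ({0, -1, -1/a} : Set ℝ)) :
    (preimageCubic a c β z).eval x = x*(1+x)*(1+a*x) * (z - zmap a c β x) := by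
  obtain ⟨h0, h1, h2⟩ := zmap_denominators_ne_zero ha hx
  simp only [preimageCubic, zmap, eval_add, eval_mul, eval_C, eval_pow, eval_X]
  field_simp
  ring

-- Differentiating `eval_preimageCubic`: the quartic is `D² zmap'` with `D = x(1+x)(1+ax)`.
lemma eval_derivative_preimageCubic_mul (z x : ℝ) :
    (derivative (preimageCubic a c β z)).eval x * (x*(1+x)*(1+a*x)) =
      (3*a*x^2 + 2*(1+a)*x + 1) * (preimageCubic a c β z).eval x - quartic a c β x := by
  simp only [preimageCubic, quartic, derivative_add, derivative_mul, derivative_C,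
    derivative_X_pow, derivative_X, eval_add, eval_mul, eval_C, eval_pow, eval_X, eval_one,
    eval_zero]
  ring

lemma isRoot_preimageCubic_and_derivative (ha : a ≠ 0) {x : ℝ}
    (hx : x ∉ ({0, -1, -1/a} : Set ℝ)) (hq : quartic a c β x = 0) :
    (preimageCubic a c β (zmap a c β x)).IsRoot x ∧
      (derivative (preimageCubic a c β (zmap a c β x))).IsRoot x := by
  have hroot : (preimageCubic a c β (zmap a c β x)).IsRoot x := by
    rw [IsRoot, eval_preimageCubic ha _ hx, sub_self, mul_zero]
  obtain ⟨h0, h1, h2⟩ := zmap_denominators_ne_zero ha hx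
  have key : (derivative (preimageCubic a c β (zmap a c β x))).eval x * (x*(1+x)*(1+a*x)) = 0 := by
    rw [eval_derivative_preimageCubic_mul, hroot.eq_zero, hq]
    ring
  exact ⟨hroot, (mul_eq_zero.1 key).resolve_right (mul_ne_zero (mul_ne_zero h0 h1) h2)⟩

lemma not_forall_zmap_eq_of_injective (ha : a ≠ 0) (z : ℝ) {ξ : Fin 4 → ℝ}
    (hξ : Function.Injective ξ) (hreg : ∀ i, ξ i ∉ ({0, -1, -1/a} : Set ℝ)) :
    ¬ ∀ i, zmap a c β (ξ i) = z := fun hz =>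
  preimageCubic_ne_zero a c β z <| eq_zero_of_natDegree_lt_card_of_eval_eq_zero _ hξ
    (fun i => by rw [eval_preimageCubic ha _ (hreg i), hz i, sub_self, mul_zero])
    (natDegree_cubic_le.trans_lt (by simp))

lemma zmap_ne_of_quartic_eq_zero (ha : a ≠ 0) {x y : ℝ} (hxy : x ≠ y)
    (hx : x ∉ ({0, -1, -1/a} : Set ℝ)) (hy : y ∉ ({0, -1, -1/a} : Set ℝ))
    (hqx : quartic a c β x = 0) (hqy : quartic a c β y = 0) : zmap a c β x ≠ zmap a c β y := by
  intro heq
  have hx₂ := isRoot_preimageCubic_and_derivative ha hx hqx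
  have hy₂ := isRoot_preimageCubic_and_derivative ha hy hqy
  rw [← heq] at hy₂
  have := four_le_natDegree_of_two_double_roots (preimageCubic_ne_zero a c β _) hxy hx₂ hy₂
  have : (preimageCubic a c β (zmap a c β x)).natDegree ≤ 3 := natDegree_cubic_le
  omega

end preimageCubic

theorem one_cut_lambda1_lt_lambda2
    (a c β : ℝ) (ha : 0 < a) (ha1 : a ≠ 1) (hc0 : 0 < c) (hc1 : c < 1)
    (hβ0 : 0 < β) (hβ1 : β < 1)
    (γ1 γ2 : ℝ) (hlt : γ1 < γ2) (hneg : γ2 < 0)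
    (hq1 : quartic a c β γ1 = 0) (hq2 : quartic a c β γ2 = 0)
    (honly : ∀ x : ℝ, quartic a c β x = 0 → x = γ1 ∨ x = γ2) :
    zmap a c β γ1 < zmap a c β γ2 := by
  by_contra! hle
  have hpoles : ∀ p ∈ ({-1, -1/a} : Set ℝ), p ∈ Ioo γ1 γ2 := fun p hp =>
    mem_Ioo_of_neg (by unfold quartic; fun_prop) (tendsto_quartic ha hc1).1
      (tendsto_quartic ha hc1).2 hlt honly (quartic_neg_of_mem_poles ha ha1 hc0 hβ0 hβ1 hp)
  have hregular : Iio 0 \ {-1, -1/a} ⊆ ({0, -1, -1/a} : Set ℝ)ᶜ := fun x hx h =>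
    hx.2 ((mem_insert_iff.1 h).resolve_left (ne_of_lt hx.1))
  rcases hle.lt_or_eq with hlt' | heq
  · obtain ⟨p₁, p₂, hp, hpp⟩ : ∃ p₁ p₂ : ℝ, p₁ < p₂ ∧ ({p₁, p₂} : Set ℝ) = {-1, -1/a} := by
      have : (-1 : ℝ) ≠ -1/a := fun h => ha1 (by field_simp at h; linarith)
      rcases this.lt_or_gt with h | h
      exacts [⟨_, _, h, rfl⟩, ⟨_, _, h, pair_comm _ _⟩]
    have hp₁ : p₁ ∈ ({-1, -1/a} : Set ℝ) := hpp ▸ mem_insert _ _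
    have hp₂ : p₂ ∈ ({-1, -1/a} : Set ℝ) := hpp ▸ mem_insert_of_mem _ rfl
    obtain ⟨z, hz₂, hz₁⟩ := exists_between hlt'
    obtain ⟨ξ, hξ, hξz⟩ := exists_four_preimages (z := z) (hpoles _ hp₁).1 hp (hpoles _ hp₂).2
      hneg (hpp ▸ (continuousOn_zmap ha.ne').mono hregular)
      (tendsto_zmap_pole ha ha1 hc0 hβ0 hβ1 hp₁) (tendsto_zmap_pole ha ha1 hc0 hβ0 hβ1 hp₂)
      tendsto_zmap_nhdsLT_zero hz₁ hz₂
    exact not_forall_zmap_eq_of_injective ha.ne' z hξ.injective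
      (fun i => hregular (hpp ▸ (hξz i).1)) fun i => (hξz i).2
  · exact zmap_ne_of_quartic_eq_zero ha.ne' hlt.ne
      (hregular ⟨hlt.trans hneg, fun h => (hpoles _ h).1.false⟩)
      (hregular ⟨hneg, fun h => (hpoles _ h).2.false⟩) hq1 hq2 heq.symm
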